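/- arXiv:1511.07295 — 4 statements merged into one kernel-verified Lean document; each statement's English description precedes it below -/
import Mathlib

section
/- Let m and n be coprime positive integers, and let f, g : ℝ/ℤ → ℝ be functions (thought of as functions on the unit circle via x ↦ e^{2πix}). Suppose there exists a nonzero integer k such that f(k·x) = g(m·x) − g(n·x) for all x ∈ ℝ/ℤ. Then f satisfies the Cooper (m,n)-signature condition: for all positive integers p, c with gcd(m,p) = gcd(n,p) = gcd(c,p) = 1, letting m̄ denote an inverse of m mod p and r the multiplicative order of n·m̄ in (ℤ/pℤ)ˣ, we have ∑_{ℓ=1}^{r} f(c·(n·m̄)^ℓ / p mod 1) = 0. -/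
/-!
Lift the orbit `c (n m̄)^ℓ / p` to a sequence `x ℓ` on the circle with `k • x ℓ = c (n m̄)^(b+ℓ) / p`
and `n • x ℓ = m • x (ℓ + 1)`. Then `∑ f (k • x ℓ) = ∑ (g (m • x ℓ) - g (m • x (ℓ + 1)))`
telescopes to zero over any period of `x`, and over a period that is a multiple of `r` it is a
positive multiple of the Cooper sum. The lift is `x ℓ = sign k · c N^(b+ℓ) / (|k| p)` for `N = n m^j` in
`ZMod (|k| p)`, where `m^j = m (m^j)^2`: then `m m^j` is idempotent, hence `1` modulo `p` where
`m` is a unit, and `N (n - m N) = 0`.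
-/

open Finset Function

section Monoid

variable {M : Type*} [Monoid M]

theorem periodic_pow_add_of_pow_add_eq {x : M} {a T : ℕ} (h : x ^ (a + T) = x ^ a) {b : ℕ}
    (hb : a ≤ b) : Periodic (fun ℓ => x ^ (b + ℓ)) T := fun ℓ => by
  obtain ⟨s, rfl⟩ := Nat.exists_eq_add_of_le hb
  dsimp only
  rw [show a + s + (ℓ + T) = a + T + (s + ℓ) by ring, pow_add, h, ← pow_add, add_assoc]

variable [Finite M]

theorem exists_pow_add_eq_pow (x : M) : ∃ a T, 0 < T ∧ x ^ (a + T) = x ^ a := by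
  obtain ⟨i, j, hij, h⟩ := Finite.exists_ne_map_eq_of_infinite (x ^ · : ℕ → M)
  rcases hij.lt_or_gt with hlt | hlt
  · exact ⟨i, j - i, by omega, by rw [Nat.add_sub_cancel' hlt.le]; exact h.symm⟩
  · exact ⟨j, i - j, by omega, by rw [Nat.add_sub_cancel' hlt.le]; exact h⟩

theorem exists_pow_eq_mul_pow_mul_pow (x : M) : ∃ j, x ^ j = x * x ^ j * x ^ j := by
  obtain ⟨a, T, hT, h⟩ := exists_pow_add_eq_pow x
  have hP : a + 1 ≤ (a + 1) * T := Nat.le_mul_of_pos_right _ hT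
  refine ⟨(a + 1) * T - 1, ?_⟩
  have := ((periodic_pow_add_of_pow_add_eq h (b := (a + 1) * T - 1) (by omega)).nat_mul_eq (a + 1))
  simp only [Nat.cast_id, add_zero] at this
  rw [← pow_succ', ← pow_add, ← this]
  congr 1
  omega

end Monoid

theorem Function.Periodic.sum_range_const_add {β : Type*} [AddCommMonoid β] {F : ℕ → β} {r : ℕ}
    (hF : Periodic F r) (a : ℕ) : ∑ ℓ ∈ range r, F (a + ℓ) = ∑ ℓ ∈ range r, F ℓ := by
  induction a with
  | zero => simp
  | succ a ih =>
    rw [← ih]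
    rcases r with _ | r
    · simp
    · rw [sum_range_succ, sum_range_succ', add_zero, add_assoc a 1 r, add_comm 1 r, hF]
      simp only [add_assoc, add_comm 1]

theorem Function.Periodic.sum_range_mul_const_add {β : Type*} [AddCommMonoid β] {F : ℕ → β} {r : ℕ}
    (hF : Periodic F r) (t a : ℕ) :
    ∑ ℓ ∈ range (t * r), F (a + ℓ) = t • ∑ ℓ ∈ range r, F ℓ := by
  induction t with
  | zero => simp
  | succ t ih =>
    rw [add_mul, one_mul, sum_range_add, ih, succ_nsmul]
    simp only [← add_assoc, hF.sum_range_const_add]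

theorem sum_range_apply_zsmul_eq_zero {G β : Type*} [AddCommGroup G] [AddCommGroup β]
    {f g : G → β} {k m n : ℤ} (hfg : ∀ x, f (k • x) = g (m • x) - g (n • x))
    (x : ℕ → G) (T : ℕ) (hx : ∀ ℓ, n • x ℓ = m • x (ℓ + 1)) (hT : x T = x 0) :
    ∑ ℓ ∈ range T, f (k • x ℓ) = 0 := by
  simp only [hfg, hx]
  rw [sum_range_sub' (fun ℓ => g (m • x ℓ)), hT, sub_self]

namespace ZMod

theorem zsmul_toAddCircle_sign_mul (k : ℤ) {p : ℕ} [NeZero k.natAbs] [NeZero p]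
    (w : ZMod (k.natAbs * p)) :
    k • toAddCircle ((k.sign : ZMod (k.natAbs * p)) * w) =
      toAddCircle (castHom (Nat.dvd_mul_left p k.natAbs) (ZMod p) w) := by
  obtain ⟨z, rfl⟩ := intCast_surjective w
  have hk : (k.natAbs : ℝ) ≠ 0 := Nat.cast_ne_zero.mpr (NeZero.ne _)
  rw [← map_zsmul, zsmul_eq_mul, ← Int.cast_mul, ← Int.cast_mul, ← mul_assoc,
    Int.mul_sign_self, map_intCast (castHom _ (ZMod p)), toAddCircle_intCast, toAddCircle_intCast,
    Int.cast_mul, Int.cast_natCast, Nat.cast_mul, mul_div_mul_left _ _ hk]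

theorem exists_lift_of_mul_modEq_one {p Q : ℕ} [NeZero Q] (hpQ : p ∣ Q) (m n mbar : ℕ)
    (hmbar : m * mbar ≡ 1 [MOD p]) :
    ∃ (N : ZMod Q) (b T : ℕ), 0 < T ∧ Periodic (fun ℓ => N ^ (b + ℓ)) T ∧
      (∀ ℓ, (n : ZMod Q) * N ^ (b + ℓ) = m * N ^ (b + ℓ + 1)) ∧
      castHom hpQ (ZMod p) N = n * mbar := by
  obtain ⟨j, hj⟩ := exists_pow_eq_mul_pow_mul_pow (m : ZMod Q)
  obtain ⟨a, T, hT, haT⟩ := exists_pow_add_eq_pow ((n : ZMod Q) * m ^ j)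
  refine ⟨n * m ^ j, a + 1, T, hT, periodic_pow_add_of_pow_add_eq haT (by omega),
    fun ℓ => ?_, ?_⟩
  · rw [show a + 1 + ℓ = a + ℓ + 1 by ring]
    linear_combination (n : ZMod Q) ^ (a + ℓ + 2) * (m : ZMod Q) ^ (j * (a + ℓ)) * hj
  · have h1 : (m : ZMod p) * mbar = 1 := by
      exact_mod_cast (natCast_eq_natCast_iff _ _ _).mpr hmbar
    have h2 : (m : ZMod p) ^ j * (mbar : ZMod p) ^ j = 1 := by rw [← mul_pow, h1, one_pow]
    have hj' := congrArg (castHom hpQ (ZMod p)) hj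
    simp only [map_mul, map_pow, map_natCast] at hj' ⊢
    congr 1
    linear_combination (-(m : ZMod p) ^ j) * h1 + (mbar : ZMod p) * (1 - m * m ^ j) * h2 -
      (mbar : ZMod p) * (mbar : ZMod p) ^ j * hj'

end ZMod

open ZMod in
theorem exists_unitAddCircle_lift_of_mul_modEq_one {k : ℤ} (hk : k ≠ 0) {p : ℕ} [NeZero p]
    (m n mbar c : ℕ) (hmbar : m * mbar ≡ 1 [MOD p]) :
    ∃ (x : ℕ → UnitAddCircle) (b T : ℕ), 0 < T ∧ Periodic x T ∧
      (∀ ℓ, (n : ℤ) • x ℓ = (m : ℤ) • x (ℓ + 1)) ∧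
      ∀ ℓ, k • x ℓ = toAddCircle ((c : ZMod p) * ((n : ZMod p) * (mbar : ZMod p)) ^ (b + ℓ)) := by
  have : NeZero k.natAbs := ⟨Int.natAbs_ne_zero.mpr hk⟩
  obtain ⟨N, b, T, hT, hN, hstep, hNu⟩ :=
    exists_lift_of_mul_modEq_one (Nat.dvd_mul_left p k.natAbs) m n mbar hmbar
  set w : ZMod (k.natAbs * p) := k.sign * c
  refine ⟨fun ℓ => toAddCircle (w * N ^ (b + ℓ)), b, T, hT,
    fun ℓ => congrArg (fun y => toAddCircle (w * y)) (hN ℓ), fun ℓ => ?_, fun ℓ => ?_⟩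
  · simp only [← map_zsmul, zsmul_eq_mul, Int.cast_natCast]
    rw [← add_assoc]
    congr 1
    linear_combination w * hstep ℓ
  · simp only [w, mul_assoc, zsmul_toAddCircle_sign_mul, map_mul, map_pow, map_natCast, hNu]

open ZMod in
theorem stmt_0_general (m n : ℕ)
    (f g : AddCircle (1 : ℝ) → ℝ)
    (hfg : ∃ k : ℤ, k ≠ 0 ∧ ∀ x : AddCircle (1 : ℝ),
      f (k • x) = g ((m : ℤ) • x) - g ((n : ℤ) • x)) :
    ∀ p c : ℕ, 0 < p → 0 < c →
      Nat.gcd m p = 1 → Nat.gcd n p = 1 → Nat.gcd c p = 1 →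
      ∀ mbar : ℕ, m * mbar ≡ 1 [MOD p] →
      ∑ ℓ ∈ Finset.Icc 1 (orderOf ((n * mbar : ℕ) : ZMod p)),
        f ((((c * (n * mbar) ^ ℓ : ℕ) : ℝ) / (p : ℝ) : ℝ) : AddCircle (1 : ℝ)) = 0 := by
  obtain ⟨k, hk, hfg⟩ := hfg
  intro p c hp _ _ _ _ mbar hmbar
  have : NeZero p := ⟨hp.ne'⟩
  set u : ZMod p := ((n * mbar : ℕ) : ZMod p)
  set F : ℕ → ℝ := fun ℓ => f (toAddCircle ((c : ZMod p) * u ^ ℓ))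
  have hF : Periodic F (orderOf u) := fun ℓ => by
    simp only [F, pow_add, pow_orderOf_eq_one, mul_one]
  obtain ⟨x, b, T, hT, hxT, hx, hkx⟩ :=
    exists_unitAddCircle_lift_of_mul_modEq_one hk m n mbar c hmbar
  have hsum := sum_range_apply_zsmul_eq_zero hfg x _ hx (hxT.nat_mul_eq (orderOf u))
  simp only [hkx, ← Nat.cast_mul, Nat.cast_id, mul_comm (orderOf u) T] at hsum
  rw [hF.sum_range_mul_const_add] at hsum
  calc _ = ∑ ℓ ∈ range (orderOf u), F (1 + ℓ) := by
        rw [← Finset.Ico_add_one_right_eq_Icc, sum_Ico_eq_sum_range, Nat.add_sub_cancel]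
        simp only [F, u, ← toAddCircle_natCast]
        push_cast
        rfl
    _ = 0 := by
      rw [hF.sum_range_const_add]
      exact (smul_eq_zero.mp hsum).resolve_left hT.ne'

/-- Cooper (m,n)-signature condition (Proposition 4.5 of the paper):
if `f(k·x) = g(m·x) − g(n·x)` on the circle `ℝ/ℤ` for some nonzero integer `k`,
then for all `p, c` coprime to `m, n, c` the Cooper sum vanishes, where `m̄` is an
inverse of `m` mod `p` and `r` is the multiplicative order of `n·m̄` in `ZMod p`. -/
theorem stmt_0 (m n : ℕ) (hm : 0 < m) (hn : 0 < n) (hmn : Nat.Coprime m n)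
    (f g : AddCircle (1 : ℝ) → ℝ)
    (hfg : ∃ k : ℤ, k ≠ 0 ∧ ∀ x : AddCircle (1 : ℝ),
      f (k • x) = g ((m : ℤ) • x) - g ((n : ℤ) • x)) :
    ∀ p c : ℕ, 0 < p → 0 < c →
      Nat.gcd m p = 1 → Nat.gcd n p = 1 → Nat.gcd c p = 1 →
      ∀ mbar : ℕ, m * mbar ≡ 1 [MOD p] →
      ∑ ℓ ∈ Finset.Icc 1 (orderOf ((n * mbar : ℕ) : ZMod p)),
        f ((((c * (n * mbar) ^ ℓ : ℕ) : ℝ) / (p : ℝ) : ℝ) : AddCircle (1 : ℝ)) = 0 :=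
  stmt_0_general m n f g hfg
end

section
/- Let s : 𝕋 → ℝ and f : 𝕋ⁿ → ℝ be bounded measurable functions, d a nonzero integer, and M an n×n integer matrix with nonzero determinant. Suppose s(ω₁) = f(ω^M) − f(ω^d) for almost all ω ∈ 𝕋ⁿ. Suppose p is the least positive integer such that e₁ is an eigenvector of M^p, with M^p e₁ = λ e₁ for some integer λ. Then there exists a function g : 𝕋 → ℝ such that for almost every ω₁ ∈ 𝕋, s(ω₁^{d^{p−1}}) = g(ω₁^λ) − g(ω₁^{d^p}). -/
/-!
Iterating the equation along `ω ↦ ω^M`, which commutes with `ω ↦ ω^d`, telescopes to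
`∑_{k<p} s((ω^{M^k})₁^{d^{p-1-k}}) = f(ω^{M^p}) − f(ω^{d^p})` almost everywhere. Integrate this
over all coordinates but `ω₁`. The `k = 0` term is `s(ω₁^{d^{p-1}})`. For `0 < k < p`,
minimality of `p` gives the first column of `M^k` a nonzero entry off the first row, so
`(ω^{M^k})₁` is a translate of a surjective character of the remaining coordinates, and the term
integrates to `∫ s`, which vanishes (integrate the equation itself over `𝕋ⁿ`). Since the first
column of `M^p` is `λ e₁`, `ω ↦ ω^{M^p}` maps the fibre over `ω₁` measure-preservingly onto the
fibre over `ω₁^λ`; so with `g(t) = ∫ f(t, y) dy` the right side integrates to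
`g(ω₁^λ) − g(ω₁^{d^p})`. All measure-preservation statements come from uniqueness of Haar
probability measures on compact groups.
-/

open MeasureTheory Function

local notation "𝕋" => AddCircle (1 : ℝ)

instance : IsProbabilityMeasure (volume : Measure 𝕋) :=
  ⟨by simp [AddCircle.measure_univ]⟩

theorem AddMonoidHom.measurePreserving_of_surjective {G H : Type*}
    [AddGroup G] [TopologicalSpace G] [IsTopologicalAddGroup G] [MeasurableSpace G] [BorelSpace G]
    [AddGroup H] [TopologicalSpace H] [IsTopologicalAddGroup H] [LocallyCompactSpace H]
    [MeasurableSpace H] [BorelSpace H]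
    {μ : Measure G} {ν : Measure H} [μ.IsAddHaarMeasure] [ν.IsAddHaarMeasure]
    [IsProbabilityMeasure μ] [IsProbabilityMeasure ν]
    (φ : G →+ H) (hφ : Continuous φ) (hsurj : Surjective φ) : MeasurePreserving φ μ ν := by
  have : (μ.map φ).IsAddHaarMeasure := μ.isAddHaarMeasure_map_of_isFiniteMeasure φ hφ hsurj
  have : IsProbabilityMeasure (μ.map φ) := Measure.isProbabilityMeasure_map hφ.aemeasurable
  exact ⟨hφ.measurable, Measure.isAddHaarMeasure_eq_of_isProbabilityMeasure _ _⟩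

theorem MeasureTheory.MeasurePreserving.integral_comp_of_aestronglyMeasurable {X Y : Type*}
    [MeasurableSpace X] [MeasurableSpace Y] {μ : Measure X} {ν : Measure Y} {φ : X → Y}
    (hφ : MeasurePreserving φ μ ν) {g : Y → ℝ} (hg : AEStronglyMeasurable g ν) :
    ∫ x, g (φ x) ∂μ = ∫ y, g y ∂ν := by
  rw [← hφ.map_eq] at hg ⊢
  exact (integral_map hφ.measurable.aemeasurable hg).symm

theorem Measurable.integrable_of_abs_le {X : Type*} [MeasurableSpace X] {μ : Measure X}
    [IsFiniteMeasure μ] {f : X → ℝ} (hf : Measurable f) {C : ℝ} (hC : ∀ x, |f x| ≤ C) :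
    Integrable f μ :=
  .of_bound hf.aestronglyMeasurable C (.of_forall hC)

section Coboundary

variable {X : Type*} [MeasurableSpace X] {μ : Measure X}

theorem integral_eq_zero_of_ae_eq_comp_sub_comp {Y : Type*} [MeasurableSpace Y] {ν : Measure Y}
    {φ ψ : X → Y} (hφ : MeasurePreserving φ μ ν) (hψ : MeasurePreserving ψ μ ν) {f : Y → ℝ}
    (hf : Integrable f ν) {h : X → ℝ} (hh : h =ᵐ[μ] fun x => f (φ x) - f (ψ x)) :
    ∫ x, h x ∂μ = 0 := by
  rw [integral_congr_ae hh, integral_sub (f := fun x => f (φ x)) (g := fun x => f (ψ x))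
    (hφ.integrable_comp_of_integrable hf) (hψ.integrable_comp_of_integrable hf),
    hφ.integral_comp_of_aestronglyMeasurable hf.1, hψ.integral_comp_of_aestronglyMeasurable hf.1,
    sub_self]

theorem ae_sum_range_iterate_eq_sub {T D : X → X} (hT : Measure.QuasiMeasurePreserving T μ μ)
    (hD : Measure.QuasiMeasurePreserving D μ μ) (hTD : Function.Commute T D) {f h : X → ℝ}
    (hh : h =ᵐ[μ] fun x => f (T x) - f (D x)) (p : ℕ) :
    ∀ᵐ x ∂μ, ∑ k ∈ Finset.range p, h (D^[p - 1 - k] (T^[k] x)) = f (T^[p] x) - f (D^[p] x) := by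
  have hterm : ∀ k, ∀ᵐ x ∂μ, h (D^[p - 1 - k] (T^[k] x)) =
      f (D^[p - 1 - k] (T^[k + 1] x)) - f (D^[p - 1 - k + 1] (T^[k] x)) := fun k => by
    filter_upwards [((hD.iterate (p - 1 - k)).comp (hT.iterate k)).ae hh] with x hx
    rwa [Function.comp_apply, ← iterate_succ_apply' D, (hTD.iterate_right _).eq,
      ← iterate_succ_apply' T] at hx
  filter_upwards [ae_all_iff.2 hterm] with x hx
  rw [Finset.sum_congr rfl fun k hk => ?_, Finset.sum_range_sub fun k => f (D^[p - k] (T^[k] x))]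
  · simp
  · rw [hx k, show p - 1 - k + 1 = p - k by grind, show p - 1 - k = p - (k + 1) by omega]

end Coboundary

section FinCons

variable {α : Type*} {m : ℕ}

theorem MeasurableEquiv.piFinSuccAbove_zero_symm_apply [MeasurableSpace α]
    (z : α × (Fin m → α)) :
    (MeasurableEquiv.piFinSuccAbove (fun _ => α) 0).symm z = Fin.cons z.1 z.2 := by
  simp [MeasurableEquiv.piFinSuccAbove, Fin.consEquiv]

@[fun_prop]
theorem measurable_finCons [MeasurableSpace α] (x : α) :
    Measurable fun y : Fin m → α => (Fin.cons x y : Fin (m + 1) → α) := by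
  simp_rw [← MeasurableEquiv.piFinSuccAbove_zero_symm_apply (x, _)]
  exact (MeasurableEquiv.measurable _).comp measurable_prodMk_left

theorem ae_ae_finCons_of_ae [MeasureSpace α] [SigmaFinite (volume : Measure α)]
    {P : (Fin (m + 1) → α) → Prop} (h : ∀ᵐ ω, P ω) :
    ∀ᵐ x, ∀ᵐ y : Fin m → α, P (Fin.cons x y) := by
  have hsymm :=
    (measurePreserving_piFinSuccAbove (fun _ : Fin (m + 1) => (volume : Measure α)) 0).symm
  have hprod := Measure.ae_ae_of_ae_prod (hsymm.quasiMeasurePreserving.ae h)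
  simp only [MeasurableEquiv.piFinSuccAbove_zero_symm_apply] at hprod
  exact hprod

end FinCons

namespace Matrix

theorem mulVec_ite_zero_eq_smul_iff {R : Type*} [NonAssocSemiring R] {m : ℕ}
    (A : Matrix (Fin (m + 1)) (Fin (m + 1)) R) (c : R) :
    A *ᵥ (fun i => if i = 0 then 1 else 0) = c • (fun i => if i = 0 then 1 else 0) ↔
      A 0 0 = c ∧ ∀ i : Fin m, A i.succ 0 = 0 := by
  have he : (fun i : Fin (m + 1) => if i = 0 then (1 : R) else 0) = Pi.single 0 1 := by
    ext i; simp [Pi.single_apply]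
  simp [he, funext_iff, Fin.forall_fin_succ, Fin.succ_ne_zero]

section ZSMulVecMul

variable {ι κ τ G : Type*} [Fintype ι] [AddCommGroup G]

/-- The map `ω ↦ ω^A` of the multiplicative notation, written additively. -/
def zsmulVecMul (A : Matrix ι κ ℤ) : (ι → G) →+ (κ → G) where
  toFun ω j := ∑ i, A i j • ω i
  map_zero' := by ext; simp
  map_add' ω ω' := by ext j; simp [smul_add, Finset.sum_add_distrib]

theorem zsmulVecMul_apply (A : Matrix ι κ ℤ) (ω : ι → G) (j : κ) :
    A.zsmulVecMul ω j = ∑ i, A i j • ω i := rfl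

theorem zsmulVecMul_zsmulVecMul [Fintype κ] (A : Matrix ι κ ℤ) (B : Matrix κ τ ℤ) (ω : ι → G) :
    B.zsmulVecMul (A.zsmulVecMul ω) = (A * B).zsmulVecMul ω := by
  ext l
  simp only [zsmulVecMul_apply, mul_apply, Finset.smul_sum, Finset.sum_smul, smul_smul]
  rw [Finset.sum_comm]
  simp_rw [mul_comm]

theorem zsmulVecMul_smul (c : ℤ) (A : Matrix ι κ ℤ) (ω : ι → G) :
    (c • A).zsmulVecMul ω = c • A.zsmulVecMul ω := by
  ext j
  simp [zsmulVecMul_apply, Finset.smul_sum, smul_smul]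

theorem zsmulVecMul_one [DecidableEq ι] (ω : ι → G) : (1 : Matrix ι ι ℤ).zsmulVecMul ω = ω := by
  ext j
  simp [zsmulVecMul_apply, one_apply]

theorem iterate_zsmulVecMul [DecidableEq ι] (A : Matrix ι ι ℤ) (k : ℕ) :
    (⇑(A.zsmulVecMul (G := G)))^[k] = ⇑((A ^ k).zsmulVecMul (G := G)) := by
  induction k with
  | zero => ext1 ω; simp [zsmulVecMul_one]
  | succ k ih => ext1 ω; rw [iterate_succ_apply', ih, zsmulVecMul_zsmulVecMul, pow_succ]

theorem zsmulVecMul_finCons_apply {m : ℕ} (A : Matrix (Fin (m + 1)) κ ℤ) (x : G) (y : Fin m → G)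
    (j : κ) : A.zsmulVecMul (Fin.cons x y) j = A 0 j • x + ∑ i, A i.succ j • y i := by
  simp [zsmulVecMul_apply, Fin.sum_univ_succ]

@[fun_prop]
theorem continuous_zsmulVecMul [TopologicalSpace G] [IsTopologicalAddGroup G]
    (A : Matrix ι κ ℤ) : Continuous (A.zsmulVecMul (G := G)) :=
  continuous_pi fun j => continuous_finsetSum _ fun i _ => (continuous_apply i).zsmul (A i j)

theorem zsmulVecMul_surjective [DecidableEq ι] [DivisibleBy G ℤ] (A : Matrix ι ι ℤ)
    (hA : A.det ≠ 0) : Surjective (A.zsmulVecMul (G := G)) := by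
  intro ω
  obtain ⟨η, rfl⟩ := DivisibleBy.surjective_smul (ι → G) ℤ hA ω
  refine ⟨A.adjugate.zsmulVecMul η, ?_⟩
  rw [zsmulVecMul_zsmulVecMul, adjugate_mul, zsmulVecMul_smul, zsmulVecMul_one]

end ZSMulVecMul

end Matrix

open Matrix

theorem measurePreserving_zsmul {G : Type*} [AddCommGroup G] [TopologicalSpace G]
    [IsTopologicalAddGroup G] [LocallyCompactSpace G] [MeasureSpace G] [BorelSpace G]
    [(volume : Measure G).IsAddHaarMeasure] [IsProbabilityMeasure (volume : Measure G)]
    [DivisibleBy G ℤ] {c : ℤ} (hc : c ≠ 0) :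
    MeasurePreserving (fun x : G => c • x) volume volume :=
  (zsmulAddGroupHom (α := G) c).measurePreserving_of_surjective (continuous_zsmul c)
    (DivisibleBy.surjective_smul _ ℤ hc)

section Torus

variable {ι : Type*} [Fintype ι]

theorem measurePreserving_eval (i : ι) :
    MeasurePreserving (fun ω : ι → 𝕋 => ω i) volume volume :=
  (Pi.evalAddMonoidHom (fun _ => 𝕋) i).measurePreserving_of_surjective (continuous_apply i)
    fun t => ⟨fun _ => t, rfl⟩

theorem measurePreserving_zsmulVecMul [DecidableEq ι] {A : Matrix ι ι ℤ} (hA : A.det ≠ 0) :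
    MeasurePreserving (A.zsmulVecMul (G := 𝕋)) volume volume :=
  (A.zsmulVecMul (G := 𝕋)).measurePreserving_of_surjective (continuous_zsmulVecMul A)
    (zsmulVecMul_surjective A hA)

theorem measurePreserving_sum_zsmul {c : ι → ℤ} (hc : ∃ i, c i ≠ 0) :
    MeasurePreserving (fun y : ι → 𝕋 => ∑ i, c i • y i) volume volume := by
  obtain ⟨i₀, hi₀⟩ := hc
  let φ : (ι → 𝕋) →+ 𝕋 := ∑ i, c i • Pi.evalAddMonoidHom (fun _ => 𝕋) i
  have hφ : ∀ y, φ y = ∑ i, c i • y i := fun y => by simp [φ]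
  simp_rw [← hφ]
  refine φ.measurePreserving_of_surjective ?_ fun t => ?_
  · simp_rw [funext hφ]
    exact continuous_finsetSum _ fun i _ => (continuous_apply i).zsmul (c i)
  · classical
    obtain ⟨u, rfl⟩ := DivisibleBy.surjective_smul 𝕋 ℤ hi₀ t
    exact ⟨Pi.single i₀ u, by simp [hφ, Pi.single_apply]⟩

end Torus

section FibreIntegrals

variable {m : ℕ}

theorem integral_zsmulVecMul_finCons_apply {κ : Type*} (A : Matrix (Fin (m + 1)) κ ℤ) (j : κ)
    (hA : ∃ i : Fin m, A i.succ j ≠ 0) {h : 𝕋 → ℝ} (hh : Measurable h) (x : 𝕋) :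
    ∫ y, h (A.zsmulVecMul (Fin.cons x y) j) = ∫ t, h t := by
  simp only [zsmulVecMul_finCons_apply]
  rw [(measurePreserving_sum_zsmul hA).integral_comp_of_aestronglyMeasurable
    (g := fun t => h (A 0 j • x + t)) (hh.comp (measurable_const_add _)).aestronglyMeasurable]
  exact integral_add_left_eq_self _ _

theorem integral_zsmulVecMul_finCons (A : Matrix (Fin (m + 1)) (Fin (m + 1)) ℤ) (hA : A.det ≠ 0)
    (hcol : ∀ i : Fin m, A i.succ 0 = 0) {f : (Fin (m + 1) → 𝕋) → ℝ} (hf : Measurable f)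
    (x : 𝕋) : ∫ y, f (A.zsmulVecMul (Fin.cons x y)) = ∫ y, f (Fin.cons (A 0 0 • x) y) := by
  set N := A.submatrix Fin.succ Fin.succ
  have hdet : A.det = A 0 0 * N.det := by
    rw [det_succ_column_zero, Fin.sum_univ_succ]
    simp [hcol, N]
  have hN : N.det ≠ 0 := right_ne_zero_of_mul (hdet ▸ hA)
  have hsplit : ∀ y, A.zsmulVecMul (Fin.cons x y) =
      Fin.cons (A 0 0 • x) ((fun j => A 0 j.succ • x) + N.zsmulVecMul y) := by
    intro y
    ext j
    rw [zsmulVecMul_finCons_apply]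
    refine Fin.cases ?_ (fun j => ?_) j <;> simp [hcol, N, zsmulVecMul_apply]
  simp only [hsplit]
  exact ((measurePreserving_add_left volume _).comp (measurePreserving_zsmulVecMul hN)
    ).integral_comp_of_aestronglyMeasurable (hf.comp (measurable_finCons _)).aestronglyMeasurable

theorem integral_zsmul_finCons {c : ℤ} (hc : c ≠ 0) {f : (Fin (m + 1) → 𝕋) → ℝ}
    (hf : Measurable f) (x : 𝕋) : ∫ y, f (c • Fin.cons x y) = ∫ y, f (Fin.cons (c • x) y) := by
  have hdet : (c • 1 : Matrix (Fin (m + 1)) (Fin (m + 1)) ℤ).det ≠ 0 := by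
    rw [det_smul, det_one, mul_one]
    exact pow_ne_zero _ hc
  have h := integral_zsmulVecMul_finCons (c • 1) hdet (fun i => by simp [Fin.succ_ne_zero]) hf x
  simpa only [zsmulVecMul_smul, zsmulVecMul_one, Matrix.smul_apply, one_apply_eq, smul_eq_mul,
    mul_one] using h

theorem sum_range_integral_zsmulVecMul_finCons_apply_zero {p : ℕ} (hp : 0 < p) {s : 𝕋 → ℝ}
    (hs : Measurable s) (hs0 : ∫ t, s t = 0) {d : ℤ} (hd : d ≠ 0)
    {M : Matrix (Fin (m + 1)) (Fin (m + 1)) ℤ}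
    (hM : ∀ k, 0 < k → k < p → ∃ i : Fin m, (M ^ k) i.succ 0 ≠ 0) (x : 𝕋) :
    ∑ k ∈ Finset.range p, ∫ y, s (d ^ (p - 1 - k) • (M ^ k).zsmulVecMul (Fin.cons x y) 0) =
      s (d ^ (p - 1) • x) := by
  rw [Finset.sum_eq_single_of_mem 0 (Finset.mem_range.2 hp) fun k hk hk0 => ?_]
  · simp [zsmulVecMul_one]
  rw [integral_zsmulVecMul_finCons_apply (M ^ k) 0
      (hM k (Nat.pos_of_ne_zero hk0) (Finset.mem_range.1 hk))
      (h := fun t => s (d ^ (p - 1 - k) • t)) (by fun_prop) x,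
    (measurePreserving_zsmul (pow_ne_zero _ hd)).integral_comp_of_aestronglyMeasurable
      hs.aestronglyMeasurable, hs0]

end FibreIntegrals

/-- Lemma 4.3(2): with `s, f, d, M` as in case (1), if `p` is the least positive integer
such that `e₁` is an eigenvector of `M^p`, with eigenvalue `λ ∈ ℤ`, then there is a
function `g : 𝕋 → ℝ` with `s(ω₁^{d^{p−1}}) = g(ω₁^λ) − g(ω₁^{d^p})` for almost every
`ω₁ ∈ 𝕋` (written additively on `𝕋 = ℝ/ℤ`). -/
theorem stmt_2 (n : ℕ) (hn : 0 < n)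
    (s : AddCircle (1 : ℝ) → ℝ) (f : (Fin n → AddCircle (1 : ℝ)) → ℝ)
    (hs_meas : Measurable s) (hf_meas : Measurable f)
    (Cs : ℝ) (hs_bdd : ∀ x, |s x| ≤ Cs)
    (Cf : ℝ) (hf_bdd : ∀ x, |f x| ≤ Cf)
    (d : ℤ) (hd : d ≠ 0)
    (M : Matrix (Fin n) (Fin n) ℤ) (hM : M.det ≠ 0)
    (heq : ∀ᵐ ω : Fin n → AddCircle (1 : ℝ),
      s (ω ⟨0, hn⟩) =
        f (fun j => ∑ k, M k j • ω k) - f (fun k => d • ω k))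
    (p : ℕ) (hp : 0 < p) (lam : ℤ)
    (hpeig : (M ^ p).mulVec (fun i => if i = ⟨0, hn⟩ then 1 else 0) =
      lam • (fun i => if i = ⟨0, hn⟩ then (1 : ℤ) else 0))
    (hpleast : ∀ q : ℕ, 0 < q → q < p → ∀ mu : ℤ,
      (M ^ q).mulVec (fun i => if i = ⟨0, hn⟩ then 1 else 0) ≠
        mu • (fun i => if i = ⟨0, hn⟩ then (1 : ℤ) else 0)) :
    ∃ g : AddCircle (1 : ℝ) → ℝ, ∀ᵐ ω₁ : AddCircle (1 : ℝ),
      s ((d ^ (p - 1)) • ω₁) = g (lam • ω₁) - g ((d ^ p) • ω₁) := by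
  obtain ⟨m, rfl⟩ : ∃ m, n = m + 1 := ⟨n - 1, by omega⟩
  simp only [show (⟨0, hn⟩ : Fin (m + 1)) = 0 from rfl, ne_eq, mulVec_ite_zero_eq_smul_iff]
    at heq hpeig hpleast
  obtain ⟨rfl, hcol⟩ := hpeig
  have hnoncol (k : ℕ) (hk0 : 0 < k) (hkp : k < p) : ∃ i : Fin m, (M ^ k) i.succ 0 ≠ 0 :=
    not_forall.1 fun h => hpleast k hk0 hkp _ ⟨rfl, h⟩
  have hΦ := measurePreserving_zsmulVecMul hM
  have hD := measurePreserving_zsmul (G := Fin (m + 1) → 𝕋) hd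
  have hs0 : ∫ t, s t = 0 := by
    rw [← (measurePreserving_eval (ι := Fin (m + 1)) 0).integral_comp_of_aestronglyMeasurable
      hs_meas.aestronglyMeasurable]
    exact integral_eq_zero_of_ae_eq_comp_sub_comp hΦ hD
      (hf_meas.integrable_of_abs_le hf_bdd) heq
  have htel := ae_sum_range_iterate_eq_sub hΦ.quasiMeasurePreserving hD.quasiMeasurePreserving
    (fun ω => map_zsmul _ d ω) heq p
  simp only [iterate_zsmulVecMul, smul_iterate, Pi.smul_apply] at htel
  refine ⟨fun t => ∫ y, f (Fin.cons t y), ?_⟩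
  filter_upwards [ae_ae_finCons_of_ae htel] with x hx
  calc s (d ^ (p - 1) • x)
      = ∑ k ∈ Finset.range p,
          ∫ y, s (d ^ (p - 1 - k) • (M ^ k).zsmulVecMul (Fin.cons x y) 0) :=
        (sum_range_integral_zsmulVecMul_finCons_apply_zero hp hs_meas hs0 hd hnoncol x).symm
    _ = ∫ y, ∑ k ∈ Finset.range p,
          s (d ^ (p - 1 - k) • (M ^ k).zsmulVecMul (Fin.cons x y) 0) :=
        (integral_finsetSum _ fun k _ =>
          (by fun_prop : Measurable _).integrable_of_abs_le fun _ => hs_bdd _).symm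
    _ = ∫ y, f ((M ^ p).zsmulVecMul (Fin.cons x y)) -
          f (d ^ p • (Fin.cons x y : Fin (m + 1) → 𝕋)) := integral_congr_ae hx
    _ = _ := by
      rw [integral_sub ((by fun_prop : Measurable _).integrable_of_abs_le fun _ => hf_bdd _)
          ((by fun_prop : Measurable _).integrable_of_abs_le fun _ => hf_bdd _),
        integral_zsmulVecMul_finCons _ (by rw [det_pow]; exact pow_ne_zero p hM) hcol hf_meas,
        integral_zsmul_finCons (pow_ne_zero p hd) hf_meas]
end

section
/- Let H be a finite-dimensional vector space over a (skew) field 𝕂 with a non-singular sesquilinear form ⟨·,·⟩. Suppose B ⊆ H is a subspace containing linearly independent vectors L₁,…,L_k with ⟨Lᵢ,Lⱼ⟩ = 0 for all i,j, and suppose there exist δ₁,…,δ_k ∈ H with ⟨δᵢ, Lⱼ⟩ = δᵢⱼ (Kronecker delta). Let U₁ = span{L₁,…,L_k} and U₂ = span{δ₁,…,δ_k} ∩ B. If B = B₀ ⊕ U₁ ⊕ U₂ for some subspace B₀ lying in the radical of the restricted pairing, and the form restricted to the quotient B/B₀ is non-singular, then dim(B/B₀) = 2·dim(U₂) and B/B₀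 contains an isotropic subspace of dimension dim(U₂). -/
/-!
`U₁ = span L` is an isotropic subspace of `B` of dimension `k` meeting the radical `B₀` trivially.
Pairing against `U₁` maps `B` onto the dual of `U₁`: the right radical of `Φ` restricted to `B`
contains the left radical `B₀` and has the same dimension, so it is `B₀`. The kernel of this map
contains `B₀ ⊕ U₁`, whence `dim B ≥ dim B₀ + 2k`, i.e. `dim U₂ ≥ k`. As `U₂ ≤ span δ`, also
`dim U₂ ≤ k`, so `U₁` is an isotropic subspace of the required dimension.
-/

open Module

theorem Submodule.finrank_sup_sup_eq_of_inf_eq_bot {K V : Type*} [DivisionRing K] [AddCommGroup V]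
    [Module K V] [FiniteDimensional K V] {A C D : Submodule K V}
    (h₁ : A ⊓ (C ⊔ D) = ⊥) (h₂ : C ⊓ D = ⊥) :
    finrank K ↥(A ⊔ C ⊔ D) = finrank K A + finrank K C + finrank K D := by
  have hACD := Submodule.finrank_sup_add_finrank_inf_eq A (C ⊔ D)
  have hCD := Submodule.finrank_sup_add_finrank_inf_eq C D
  rw [h₁, finrank_bot] at hACD
  rw [h₂, finrank_bot] at hCD
  rw [sup_assoc]
  omega

theorem LinearMap.apply_apply_eq_zero_of_mem_span {R M : Type*} [CommSemiring R] [AddCommMonoid M]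
    [Module R M] (Φ : M →ₗ[R] M →ₗ[R] R) {s : Set M} (h : ∀ x ∈ s, ∀ y ∈ s, Φ x y = 0) :
    ∀ x ∈ Submodule.span R s, ∀ y ∈ Submodule.span R s, Φ x y = 0 := by
  intro x hx y hy
  induction hx using Submodule.span_induction with
  | mem x hx =>
    induction hy using Submodule.span_induction with
    | mem y hy => exact h x hx y hy
    | zero => simp
    | add y z _ _ hy hz => simp [hy, hz]
    | smul a y _ hy => simp [hy]
  | zero => simp
  | add x z _ _ hx hz => simp [hx, hz]
  | smul a x _ hx => simp [hx]

section Pairing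

variable {K V : Type*} [Field K] [AddCommGroup V] [Module K V] [FiniteDimensional K V]

theorem LinearMap.finrank_ker_flip_eq (ψ : V →ₗ[K] V →ₗ[K] K) :
    finrank K (LinearMap.ker ψ.flip) = finrank K (LinearMap.ker ψ) := by
  have hflip := ψ.flip.finrank_range_add_finrank_ker
  have hann := Subspace.finrank_add_finrank_dualAnnihilator_eq (LinearMap.ker ψ)
  rw [LinearMap.dualAnnihilator_ker_eq_range_flip, add_comm] at hann
  exact Nat.add_left_cancel (hflip.trans hann.symm)

theorem LinearMap.ker_flip_eq_of_ker_le {ψ : V →ₗ[K] V →ₗ[K] K}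
    (h : LinearMap.ker ψ ≤ LinearMap.ker ψ.flip) : LinearMap.ker ψ.flip = LinearMap.ker ψ :=
  (Submodule.eq_of_le_of_finrank_eq h ψ.finrank_ker_flip_eq.symm).symm

theorem LinearMap.finrank_ker_add_two_mul_finrank_le {ψ : V →ₗ[K] V →ₗ[K] K}
    (hker : LinearMap.ker ψ ≤ LinearMap.ker ψ.flip) {W : Submodule K V}
    (hW : ∀ x ∈ W, ∀ y ∈ W, ψ x y = 0) (hWker : W ⊓ LinearMap.ker ψ = ⊥) :
    finrank K (LinearMap.ker ψ) + 2 * finrank K W ≤ finrank K V := by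
  set f : V →ₗ[K] W →ₗ[K] K := ψ.compl₂ W.subtype
  have hf : Function.Surjective f := by
    refine LinearMap.flip_injective_iff₁.mp ((injective_iff_map_eq_zero _).mpr fun w hw => ?_)
    have hwker : (w : V) ∈ W ⊓ LinearMap.ker ψ := by
      refine Submodule.mem_inf.mpr ⟨w.2, ?_⟩
      rw [← LinearMap.ker_flip_eq_of_ker_le hker, LinearMap.mem_ker]
      ext x
      exact LinearMap.congr_fun hw x
    rw [hWker, Submodule.mem_bot] at hwker
    exact Subtype.ext hwker
  have hkerf : LinearMap.ker ψ ⊔ W ≤ LinearMap.ker f := by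
    refine sup_le (fun x hx => ?_) (fun x hx => ?_) <;> ext w
    · simp [f, LinearMap.mem_ker.mp hx]
    · simp [f, hW x hx w w.2]
  have hrank := f.finrank_range_add_finrank_ker
  rw [LinearMap.range_eq_top.mpr hf, finrank_top, Subspace.dual_finrank_eq] at hrank
  have hsup := Submodule.finrank_sup_add_finrank_inf_eq (LinearMap.ker ψ) W
  rw [inf_comm, hWker, finrank_bot] at hsup
  have := Submodule.finrank_mono hkerf
  omega

end Pairing

theorem finrank_add_two_mul_finrank_le_of_isotropic {K H : Type*} [Field K] [AddCommGroup H]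
    [Module K H] [FiniteDimensional K H] (Φ : H →ₗ[K] H →ₗ[K] K) {B R W : Submodule K H}
    (hRB : R ≤ B) (hWB : W ≤ B) (hrad : ∀ x ∈ R, ∀ y ∈ B, Φ x y = 0 ∧ Φ y x = 0)
    (hnondeg : ∀ x ∈ B, (∀ y ∈ B, Φ x y = 0) → x ∈ R)
    (hW : ∀ x ∈ W, ∀ y ∈ W, Φ x y = 0) (hWR : W ⊓ R = ⊥) :
    finrank K R + 2 * finrank K W ≤ finrank K B := by
  set ψ := Φ.compl₁₂ B.subtype B.subtype
  have hkerψ : LinearMap.ker ψ = R.comap B.subtype := by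
    ext x
    refine ⟨fun hx => hnondeg x x.2 fun y hy => LinearMap.congr_fun hx ⟨y, hy⟩, fun hx => ?_⟩
    ext y
    exact (hrad x hx y y.2).1
  have hker : LinearMap.ker ψ ≤ LinearMap.ker ψ.flip := by
    intro x hx
    rw [hkerψ] at hx
    ext y
    exact (hrad x hx y y.2).2
  have hWker : W.comap B.subtype ⊓ LinearMap.ker ψ = ⊥ := by
    rw [hkerψ, ← Submodule.comap_inf, hWR, Submodule.comap_bot, Submodule.ker_subtype]
  have hbound := LinearMap.finrank_ker_add_two_mul_finrank_le hker
    (W := W.comap B.subtype) (fun x hx y hy => hW x hx y hy) hWker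
  rwa [hkerψ, (Submodule.comapSubtypeEquivOfLe hRB).finrank_eq,
    (Submodule.comapSubtypeEquivOfLe hWB).finrank_eq] at hbound

theorem stmt_10_general {𝕂 H : Type*} [Field 𝕂] [AddCommGroup H] [Module 𝕂 H]
    [FiniteDimensional 𝕂 H]
    (Φ : H →ₗ[𝕂] H →ₗ[𝕂] 𝕂)
    (k : ℕ) (L δ : Fin k → H) (hLindep : LinearIndependent 𝕂 L)
    (B B₀ : Submodule 𝕂 H)
    (hLL : ∀ i j, Φ (L i) (L j) = 0)
    (U₁ U₂ : Submodule 𝕂 H)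
    (hU₁ : U₁ = Submodule.span 𝕂 (Set.range L))
    (hU₂ : U₂ = Submodule.span 𝕂 (Set.range δ) ⊓ B)
    (hdecomp : B₀ ⊔ U₁ ⊔ U₂ = B)
    (hind₁ : B₀ ⊓ (U₁ ⊔ U₂) = ⊥) (hind₂ : U₁ ⊓ U₂ = ⊥)
    (hrad : ∀ x ∈ B₀, ∀ y ∈ B, Φ x y = 0 ∧ Φ y x = 0)
    (hquot_nonsing : ∀ x ∈ B, (∀ y ∈ B, Φ x y = 0) → x ∈ B₀) :
    finrank 𝕂 B = finrank 𝕂 B₀ + 2 * finrank 𝕂 U₂ ∧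
    ∃ W : Submodule 𝕂 H, W ≤ B ∧ finrank 𝕂 W = finrank 𝕂 U₂ ∧
      W ⊓ B₀ = ⊥ ∧ ∀ x ∈ W, ∀ y ∈ W, Φ x y = 0 := by
  have hB₀B : B₀ ≤ B := hdecomp ▸ le_sup_left.trans le_sup_left
  have hU₁B : U₁ ≤ B := hdecomp ▸ le_sup_right.trans le_sup_left
  have hU₁B₀ : U₁ ⊓ B₀ = ⊥ :=
    disjoint_iff.mp ((disjoint_iff.mpr hind₁).mono_right le_sup_left).symm
  have hU₁iso : ∀ x ∈ U₁, ∀ y ∈ U₁, Φ x y = 0 := hU₁ ▸ Φ.apply_apply_eq_zero_of_mem_span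
    (by rintro _ ⟨i, rfl⟩ _ ⟨j, rfl⟩; exact hLL i j)
  have hU₁k : finrank 𝕂 U₁ = k := by rw [hU₁, finrank_span_eq_card hLindep, Fintype.card_fin]
  have hU₂k : finrank 𝕂 U₂ ≤ k := hU₂ ▸ (Submodule.finrank_mono inf_le_left).trans
    ((finrank_range_le_card δ).trans_eq (Fintype.card_fin k))
  have hdim := Submodule.finrank_sup_sup_eq_of_inf_eq_bot hind₁ hind₂
  rw [hdecomp] at hdim
  have hbound := finrank_add_two_mul_finrank_le_of_isotropic Φ hB₀B hU₁B hrad hquot_nonsing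
    hU₁iso hU₁B₀
  exact ⟨by omega, U₁, hU₁B, by omega, hU₁B₀, hU₁iso⟩

/-- linear-algebra core of Theorem 3.6: `H` finite-dimensional with a
non-singular bilinear pairing `Φ`; `B ⊆ H` a subspace containing an isotropic family
`L₁,…,L_k` (linearly independent, pairwise pairing to zero) admitting duals
`δ₁,…,δ_k ∈ H` with `Φ(δᵢ, Lⱼ) = δᵢⱼ`.  Let `U₁ = span{Lᵢ}`, `U₂ = span{δᵢ} ⊓ B`.  If
`B = B₀ ⊕ U₁ ⊕ U₂` with `B₀` in the radical of the pairing restricted to `B`, and the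
induced pairing on `B/B₀` is non-singular, then `dim(B/B₀) = 2·dim U₂`
(i.e. `dim B = dim B₀ + 2 dim U₂`) and `B/B₀` contains an isotropic subspace of
dimension `dim U₂` (an isotropic `W ≤ B` with `W ⊓ B₀ = ⊥`). -/
theorem stmt_10 {𝕂 H : Type*} [Field 𝕂] [AddCommGroup H] [Module 𝕂 H]
    [FiniteDimensional 𝕂 H]
    (Φ : H →ₗ[𝕂] H →ₗ[𝕂] 𝕂)
    (hnonsing : ∀ x, (∀ y, Φ x y = 0) → x = 0)
    (k : ℕ) (L δ : Fin k → H) (hLindep : LinearIndependent 𝕂 L)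
    (B B₀ : Submodule 𝕂 H)
    (hLB : ∀ i, L i ∈ B)
    (hLL : ∀ i j, Φ (L i) (L j) = 0)
    (hδL : ∀ i j, Φ (δ i) (L j) = if i = j then 1 else 0)
    (U₁ U₂ : Submodule 𝕂 H)
    (hU₁ : U₁ = Submodule.span 𝕂 (Set.range L))
    (hU₂ : U₂ = Submodule.span 𝕂 (Set.range δ) ⊓ B)
    (hdecomp : B₀ ⊔ U₁ ⊔ U₂ = B)
    (hind₁ : B₀ ⊓ (U₁ ⊔ U₂) = ⊥) (hind₂ : U₁ ⊓ U₂ = ⊥)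
    (hrad : ∀ x ∈ B₀, ∀ y ∈ B, Φ x y = 0 ∧ Φ y x = 0)
    (hquot_nonsing : ∀ x ∈ B, (∀ y ∈ B, Φ x y = 0) → x ∈ B₀) :
    finrank 𝕂 B = finrank 𝕂 B₀ + 2 * finrank 𝕂 U₂ ∧
    ∃ W : Submodule 𝕂 H, W ≤ B ∧ finrank 𝕂 W = finrank 𝕂 U₂ ∧
      W ⊓ B₀ = ⊥ ∧ ∀ x ∈ W, ∀ y ∈ W, Φ x y = 0 :=
  stmt_10_general Φ k L δ hLindep B B₀ hLL U₁ U₂ hU₁ hU₂ hdecomp hind₁ hind₂ hrad hquot_nonsing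
end

section
/- Let f : ℤⁿ → ℂ be square-summable (f ∈ ℓ²(ℤⁿ), extended by zero to ℚⁿ as a : ℚⁿ → ℂ), let d be a nonzero integer, M an invertible n×n rational matrix, and J ∈ ℤⁿ a nonzero vector such that M^{−p}J is never a rational multiple of J for any p ≥ 1. Suppose for all I ∈ ℚⁿ not a rational multiple of J the identity a(M^{−1}I) = a(d^{−1}I) holds. Then the sequence of values v_p := a(d^{p−1}·M^{−p}·J), p ≥ 1, is constant, these arguments d^{p−1}M^{−p}J are pairwise distinct, and hence by square-summability a(M^{−1}J) = 0. -/
/-- key cancellation in Lemma 4.3(1): let `a : ℚⁿ → ℂ` be supported on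
`ℤⁿ` and square-summable there, `d` a nonzero integer, `M` an invertible rational
matrix, `J ∈ ℤⁿ` nonzero such that `M^{−p}J` is never a rational multiple of `J`.
If `a(M^{−1}I) = a(d^{−1}I)` for all `I` not a rational multiple of `J`, then the
values `v_p = a(d^{p−1}M^{−p}J)` are all equal, the points `d^{p−1}M^{−p}J` are
pairwise distinct, and hence `a(M^{−1}J) = 0` by square-summability. -/
theorem stmt_16 (n : ℕ) (a : (Fin n → ℚ) → ℂ)
    (hsupp : ∀ I : Fin n → ℚ, (¬ ∀ i, ∃ z : ℤ, I i = (z : ℚ)) → a I = 0)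
    (hsq : Summable fun J : Fin n → ℤ => ‖a (fun i => ((J i : ℚ)))‖ ^ 2)
    (d : ℤ) (hd : d ≠ 0)
    (M : Matrix (Fin n) (Fin n) ℚ) (hM : IsUnit M.det)
    (J : Fin n → ℤ) (hJ : J ≠ 0)
    (hnoeig : ∀ p : ℕ, 1 ≤ p → ¬ ∃ c : ℚ,
      (M⁻¹ ^ p).mulVec (fun i => (J i : ℚ)) = c • fun i => (J i : ℚ))
    (hrel : ∀ I : Fin n → ℚ, (¬ ∃ c : ℚ, I = c • fun i => (J i : ℚ)) →
      a (M⁻¹.mulVec I) = a (((d : ℚ))⁻¹ • I)) :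
    (∀ p : ℕ, 1 ≤ p →
      a (((d : ℚ)) ^ (p - 1) • (M⁻¹ ^ p).mulVec (fun i => (J i : ℚ))) =
        a (M⁻¹.mulVec (fun i => (J i : ℚ)))) ∧
    (∀ p q : ℕ, 1 ≤ p → 1 ≤ q → p ≠ q →
      ((d : ℚ)) ^ (p - 1) • (M⁻¹ ^ p).mulVec (fun i => (J i : ℚ)) ≠
        ((d : ℚ)) ^ (q - 1) • (M⁻¹ ^ q).mulVec (fun i => (J i : ℚ))) ∧
    a (M⁻¹.mulVec (fun i => (J i : ℚ))) = 0 := by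
  haveI := M.invertibleOfIsUnitDet hM
  set Jv : Fin n → ℚ := fun i => (J i : ℚ) with hJvdef
  have hMinv : M⁻¹ = ⅟M := (Matrix.invOf_eq_nonsing_inv M).symm
  have hdQ : (d : ℚ) ≠ 0 := Int.cast_ne_zero.mpr hd
  -- powers cancel
  have hcancel : ∀ p : ℕ, M ^ p * M⁻¹ ^ p = 1 := by
    intro p
    rw [hMinv, ← invOf_pow, mul_invOf_self]
  have hcancel2 : ∀ p q : ℕ, p ≤ q → M ^ p * M⁻¹ ^ q = M⁻¹ ^ (q - p) := by
    intro p q hpq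
    have : M⁻¹ ^ q = M⁻¹ ^ p * M⁻¹ ^ (q - p) := by
      rw [← pow_add]
      congr 1
      omega
    rw [this, ← mul_assoc, hcancel, one_mul]
  -- Part 1
  have part1 : ∀ p : ℕ, 1 ≤ p →
      a ((d:ℚ) ^ (p - 1) • (M⁻¹ ^ p).mulVec Jv) = a (M⁻¹.mulVec Jv) := by
    intro p hp
    induction p, hp using Nat.le_induction with
    | base => simp
    | succ p hp ih =>
      have hnem : ¬ ∃ c : ℚ, ((d:ℚ) ^ p • (M⁻¹ ^ p).mulVec Jv) = c • Jv := by
        rintro ⟨c, hc⟩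
        refine hnoeig p hp ⟨((d:ℚ) ^ p)⁻¹ * c, ?_⟩
        have := congrArg (fun v => ((d:ℚ) ^ p)⁻¹ • v) hc
        simpa [smul_smul, inv_mul_cancel₀ (pow_ne_zero p hdQ)] using this
      have h1 : (d:ℚ) ^ (p + 1 - 1) • (M⁻¹ ^ (p + 1)).mulVec Jv
          = M⁻¹.mulVec ((d:ℚ) ^ p • (M⁻¹ ^ p).mulVec Jv) := by
        rw [Matrix.mulVec_smul, Matrix.mulVec_mulVec, ← pow_succ']
        simp
      rw [h1, hrel _ hnem]
      obtain ⟨k, rfl⟩ : ∃ k, p = k + 1 := ⟨p - 1, by omega⟩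
      have h2 : ((d:ℚ))⁻¹ • ((d:ℚ) ^ (k + 1) • (M⁻¹ ^ (k + 1)).mulVec Jv)
          = (d:ℚ) ^ (k + 1 - 1) • (M⁻¹ ^ (k + 1)).mulVec Jv := by
        rw [smul_smul]
        congr 1
        rw [pow_succ', ← mul_assoc, inv_mul_cancel₀ hdQ, one_mul]
        simp
      rw [h2]
      exact ih
  -- Part 2 (ordered version)
  have part2' : ∀ p q : ℕ, 1 ≤ p → p < q →
      (d:ℚ) ^ (p - 1) • (M⁻¹ ^ p).mulVec Jv ≠ (d:ℚ) ^ (q - 1) • (M⁻¹ ^ q).mulVec Jv := by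
    intro p q hp hpq heq
    refine hnoeig (q - p) (by omega) ⟨(d:ℚ) ^ (p - 1) / (d:ℚ) ^ (q - 1), ?_⟩
    have key := congrArg ((M ^ p).mulVec ·) heq
    simp only [Matrix.mulVec_smul, Matrix.mulVec_mulVec] at key
    rw [hcancel p, hcancel2 p q (le_of_lt hpq)] at key
    have hdq1 : ((d:ℚ) ^ (q - 1)) ≠ 0 := pow_ne_zero _ hdQ
    have := congrArg (fun v => ((d:ℚ) ^ (q - 1))⁻¹ • v) key
    simp only [smul_smul, inv_mul_cancel₀ hdq1, one_smul] at this
    rw [Matrix.one_mulVec] at this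
    rw [← this]
    rw [div_eq_inv_mul, mul_comm]
  have part2 : ∀ p q : ℕ, 1 ≤ p → 1 ≤ q → p ≠ q →
      (d:ℚ) ^ (p - 1) • (M⁻¹ ^ p).mulVec Jv ≠ (d:ℚ) ^ (q - 1) • (M⁻¹ ^ q).mulVec Jv := by
    intro p q hp hq hne
    rcases lt_or_gt_of_ne hne with h | h
    · exact part2' p q hp h
    · exact fun e => part2' q p hq h e.symm
  refine ⟨part1, part2, ?_⟩
  -- Part 3
  by_cases hall : ∀ p : ℕ, ∀ i, ∃ z : ℤ,
      ((d:ℚ) ^ p • (M⁻¹ ^ (p + 1)).mulVec Jv) i = (z : ℚ)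
  · choose W hW using hall
    have hcast : ∀ p, (fun i => ((W p i : ℚ))) = (d:ℚ) ^ p • (M⁻¹ ^ (p + 1)).mulVec Jv :=
      fun p => funext fun i => (hW p i).symm
    have hWinj : Function.Injective W := by
      intro p q h
      by_contra hne
      refine part2 (p + 1) (q + 1) (by omega) (by omega) (by omega) ?_
      simp only [Nat.add_sub_cancel]
      rw [← hcast p, ← hcast q, h]
    have hsum : Summable (fun p : ℕ => ‖a (fun i => ((W p i : ℚ)))‖ ^ 2) :=
      hsq.comp_injective hWinj
    have hconst : ∀ p : ℕ, ‖a (fun i => ((W p i : ℚ)))‖ ^ 2 = ‖a (M⁻¹.mulVec Jv)‖ ^ 2 := by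
      intro p
      rw [hcast p]
      have := part1 (p + 1) (by omega)
      simp only [Nat.add_sub_cancel] at this
      rw [this]
    rw [funext hconst] at hsum
    have h0 : ‖a (M⁻¹.mulVec Jv)‖ ^ 2 = 0 := (summable_const_iff _).mp hsum
    have : ‖a (M⁻¹.mulVec Jv)‖ = 0 := by
      have := pow_eq_zero_iff (n := 2) (by norm_num) |>.mp h0
      exact this
    exact norm_eq_zero.mp this
  · push_neg at hall
    obtain ⟨p, i, hpi⟩ := hall
    have h0 : a ((d:ℚ) ^ p • (M⁻¹ ^ (p + 1)).mulVec Jv) = 0 := by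
      apply hsupp
      intro h
      obtain ⟨z, hz⟩ := h i
      exact hpi z hz
    have := part1 (p + 1) (by omega)
    simp only [Nat.add_sub_cancel] at this
    rw [← this, h0]
end
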